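/- arXiv:2601.03320 — 2 statements merged into one kernel-verified Lean document; each statement's English description precedes it below -/
import Mathlib

section
/- As u → 1, the Jensen–Shannon generator satisfies f(u) = (1/8)·(u−1)² + o((u−1)²); that is, the function u ↦ f(u) − (1/8)·(u−1)² is little-o of u ↦ (u−1)² in the neighborhood filter of 1 (within (0, ∞)), where f(u) = (u/2)·log u − ((u+1)/2)·log((u+1)/2). -/
open Asymptotics Filter Real

private lemma log_expansion_littleO :
    (fun x : ℝ => Real.log (1 + x) - x + x ^ 2 / 2) =o[nhds 0] fun x : ℝ => x ^ 2 := by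
  have hO : (fun x : ℝ => Real.log (1 + x) - x + x ^ 2 / 2) =O[nhds 0]
      fun x : ℝ => x * x ^ 2 := by
    rw [isBigO_iff]
    refine ⟨2, ?_⟩
    filter_upwards [Metric.ball_mem_nhds (0 : ℝ) (by norm_num : (0:ℝ) < 1/2)] with x hx
    rw [Metric.mem_ball, Real.dist_eq, sub_zero] at hx
    have h1 : |(-x : ℝ)| < 1 := by rw [abs_neg]; linarith [abs_nonneg x]
    have := Real.abs_log_sub_add_sum_range_le h1 2
    simp only [Finset.sum_range_succ, Finset.sum_range_zero] at this
    have hle : |Real.log (1 + x) - x + x ^ 2 / 2| ≤ |x| ^ 3 / (1 - |x|) := by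
      have heq : (0:ℝ) + (-x) ^ (0 + 1) / (0 + 1) + (-x) ^ (1 + 1) / (1 + 1)
          + Real.log (1 - -x) = Real.log (1 + x) - x + x ^ 2 / 2 := by
        ring_nf
      rw [abs_neg] at this
      rw [← heq]
      convert this using 2
      ring_nf
    have hpos : (0:ℝ) < 1 - |x| := by linarith
    have h2 : |x| ^ 3 / (1 - |x|) ≤ 2 * |x| ^ 3 := by
      rw [div_le_iff₀ hpos]
      nlinarith [abs_nonneg x, pow_nonneg (abs_nonneg x) 3]
    calc ‖Real.log (1 + x) - x + x ^ 2 / 2‖ ≤ |x| ^ 3 / (1 - |x|) := hle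
      _ ≤ 2 * |x| ^ 3 := h2
      _ = 2 * ‖x * x ^ 2‖ := by
          rw [Real.norm_eq_abs, abs_mul, abs_pow]; ring
  have hlo : (fun x : ℝ => x * x ^ 2) =o[nhds 0] fun x : ℝ => x ^ 2 := by
    have h1 : (fun x : ℝ => x) =o[nhds 0] fun _ : ℝ => (1:ℝ) :=
      (isLittleO_one_iff ℝ).2 tendsto_id
    simpa using h1.mul_isBigO (isBigO_refl (fun x : ℝ => x ^ 2) (nhds 0))
  exact hO.trans_isLittleO hlo

/-- Second-order expansion of the Jensen–Shannon generator at `u = 1`: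
`f u = (1/8) * (u - 1)^2 + o((u - 1)^2)` as `u → 1` within `(0, ∞)`, where
`f u = (u/2) * log u - ((u+1)/2) * log ((u+1)/2)`. -/
theorem js_generator_isLittleO_at_one :
    (fun u : ℝ =>
        (u / 2 * Real.log u - (u + 1) / 2 * Real.log ((u + 1) / 2)) - 1/8 * (u - 1)^2)
      =o[nhdsWithin 1 (Set.Ioi (0 : ℝ))] fun u : ℝ => (u - 1)^2 := by
  have ht : Tendsto (fun u : ℝ => u - 1) (nhds 1) (nhds 0) := by
    simpa using ((continuous_sub_right (1:ℝ)).tendsto 1)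
  have ht2 : Tendsto (fun u : ℝ => (u - 1) / 2) (nhds 1) (nhds 0) := by
    simpa using ht.div_const 2
  -- A term
  have hA : (fun u : ℝ => Real.log u - (u - 1) + (u - 1) ^ 2 / 2) =o[nhds 1]
      fun u : ℝ => (u - 1) ^ 2 := by
    have := log_expansion_littleO.comp_tendsto ht
    have e : ∀ u : ℝ, 1 + (u - 1) = u := fun u => by ring
    simpa [Function.comp_def, e] using this
  -- B term
  have hB : (fun u : ℝ => Real.log ((u + 1) / 2) - (u - 1) / 2 + ((u - 1) / 2) ^ 2 / 2)
      =o[nhds 1] fun u : ℝ => (u - 1) ^ 2 := by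
    have h := log_expansion_littleO.comp_tendsto ht2
    have e : ∀ u : ℝ, 1 + (u - 1) / 2 = (u + 1) / 2 := fun u => by ring
    have h' : (fun u : ℝ => Real.log ((u + 1) / 2) - (u - 1) / 2 + ((u - 1) / 2) ^ 2 / 2)
        =o[nhds 1] fun u : ℝ => ((u - 1) / 2) ^ 2 := by
      simpa [Function.comp_def, e] using h
    refine h'.trans_isBigO (IsBigO.of_bound (1/4) ?_)
    filter_upwards with u
    rw [Real.norm_eq_abs, Real.norm_eq_abs]
    rw [abs_pow, abs_pow, abs_div]
    rw [div_pow]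
    have := sq_nonneg (|u - 1|)
    simp only [abs_two]
    nlinarith [sq_nonneg (|u-1|)]
  -- cube term
  have hcube : (fun u : ℝ => (u - 1) ^ 3) =o[nhds 1] fun u : ℝ => (u - 1) ^ 2 := by
    have h1 : (fun u : ℝ => u - 1) =o[nhds 1] fun _ : ℝ => (1:ℝ) :=
      (isLittleO_one_iff ℝ).2 ht
    have := h1.mul_isBigO (isBigO_refl (fun u : ℝ => (u - 1) ^ 2) (nhds 1))
    simpa [pow_succ, mul_comm, mul_assoc, mul_left_comm] using this
  -- bounded factors
  have hb1 : (fun u : ℝ => u / 2) =O[nhds 1] fun _ : ℝ => (1:ℝ) := by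
    exact (((continuous_id.div_const 2).tendsto (1:ℝ))).isBigO_one ℝ
  have hb2 : (fun u : ℝ => (u + 1) / 2) =O[nhds 1] fun _ : ℝ => (1:ℝ) := by
    exact ((((continuous_id.add continuous_const).div_const 2).tendsto (1:ℝ))).isBigO_one ℝ
  have term2 : (fun u : ℝ => u / 2 * (Real.log u - (u - 1) + (u - 1) ^ 2 / 2)) =o[nhds 1]
      fun u : ℝ => (u - 1) ^ 2 := by
    simpa using hb1.mul_isLittleO hA
  have term3 : (fun u : ℝ => (u + 1) / 2 *
      (Real.log ((u + 1) / 2) - (u - 1) / 2 + ((u - 1) / 2) ^ 2 / 2)) =o[nhds 1]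
      fun u : ℝ => (u - 1) ^ 2 := by
    simpa using hb2.mul_isLittleO hB
  have key : (fun u : ℝ =>
      (u / 2 * Real.log u - (u + 1) / 2 * Real.log ((u + 1) / 2)) - 1/8 * (u - 1)^2)
      =o[nhds 1] fun u : ℝ => (u - 1) ^ 2 := by
    have := ((hcube.const_mul_left (-(3/16))).add term2).sub term3
    refine this.congr' ?_ (EventuallyEq.refl _ _)
    filter_upwards with u
    ring
  exact key.mono nhdsWithin_le_nhds
end

section
/- The Jensen–Shannon generator f(u) = (u/2)·log u − ((u+1)/2)·log((u+1)/2) satisfies the one-sided quadratic comparison bounds: f(u) ≤ (1/8)·(u−1)² for all u ≥ 1, and f(u) ≥ (1/8)·(u−1)² for all u with 0 < u ≤ 1. -/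
/-!
With `g u = (u - 1)² / 8 - f u` we have `g 1 = 0` and
`g' u = (u - 1) / 4 - (log u - log ((u + 1) / 2)) / 2`. Since
`log u - log ((u + 1) / 2) ≤ 2u / (u + 1) - 1 ≤ (u - 1) / 2`, `g` is monotone on `(0, ∞)`,
so it is nonnegative on `[1, ∞)` and nonpositive on `(0, 1]`.
-/

open Real Set

noncomputable def jsGenerator (u : ℝ) : ℝ :=
  u / 2 * log u - (u + 1) / 2 * log ((u + 1) / 2)

lemma hasDerivAt_jsGenerator {u : ℝ} (hu : 0 < u) :
    HasDerivAt jsGenerator ((log u - log ((u + 1) / 2)) / 2) u := by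
  have hmid : HasDerivAt (fun u : ℝ => (u + 1) / 2) (1 / 2) u := by
    simpa using ((hasDerivAt_id u).add_const 1).div_const 2
  have := ((hasDerivAt_mul_log hu.ne').div_const 2).sub
    ((hasDerivAt_mul_log (by positivity : (u + 1) / 2 ≠ 0)).comp u hmid)
  refine (this.congr_deriv (by ring)).congr_of_eventuallyEq (.of_forall fun v => ?_)
  simp only [jsGenerator, Pi.sub_apply, Function.comp]
  ring

lemma log_sub_log_midpoint_le {u : ℝ} (hu : 0 < u) :
    log u - log ((u + 1) / 2) ≤ (u - 1) / 2 := by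
  have hmid : 0 < (u + 1) / 2 := by positivity
  calc log u - log ((u + 1) / 2) = log (u / ((u + 1) / 2)) := (log_div hu.ne' hmid.ne').symm
    _ ≤ u / ((u + 1) / 2) - 1 := log_le_sub_one_of_pos (div_pos hu hmid)
    _ = (u - 1) / 2 - (u - 1) ^ 2 / (2 * (u + 1)) := by field_simp; ring
    _ ≤ (u - 1) / 2 := sub_le_self _ (by positivity)

lemma monotoneOn_sq_sub_jsGenerator :
    MonotoneOn (fun u => 1 / 8 * (u - 1) ^ 2 - jsGenerator u) (Ioi 0) := by
  have hderiv : ∀ u ∈ Ioi (0 : ℝ), HasDerivAt (fun u => 1 / 8 * (u - 1) ^ 2 - jsGenerator u)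
      ((u - 1) / 4 - (log u - log ((u + 1) / 2)) / 2) u := fun u hu => by
    refine ((((hasDerivAt_id u).sub_const 1).pow 2 |>.const_mul (1 / 8)).sub
      (hasDerivAt_jsGenerator hu)).congr_deriv ?_
    simp only [id, Nat.cast_ofNat]
    ring
  refine monotoneOn_of_hasDerivWithinAt_nonneg (convex_Ioi 0)
    (fun u hu => (hderiv u hu).continuousAt.continuousWithinAt)
    (fun u hu => (hderiv u (interior_subset hu)).hasDerivWithinAt) fun u hu => ?_
  rw [interior_Ioi] at hu
  linarith [log_sub_log_midpoint_le (mem_Ioi.mp hu)]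

lemma jsGenerator_one : jsGenerator 1 = 0 := by
  norm_num [jsGenerator]

lemma jsGenerator_le_sq_of_one_le {u : ℝ} (hu : 1 ≤ u) : jsGenerator u ≤ 1 / 8 * (u - 1) ^ 2 := by
  have := monotoneOn_sq_sub_jsGenerator (mem_Ioi.mpr one_pos) (mem_Ioi.mpr (by linarith)) hu
  norm_num [jsGenerator_one] at this
  exact this

lemma sq_le_jsGenerator_of_le_one {u : ℝ} (hu₀ : 0 < u) (hu₁ : u ≤ 1) :
    1 / 8 * (u - 1) ^ 2 ≤ jsGenerator u := by
  have := monotoneOn_sq_sub_jsGenerator hu₀ (mem_Ioi.mpr one_pos) hu₁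
  norm_num [jsGenerator_one] at this
  exact this

/-- One-sided quadratic comparison bounds for the Jensen–Shannon generator
`f u = (u/2) * log u - ((u+1)/2) * log ((u+1)/2)`:
`f u ≤ (1/8) * (u - 1)^2` for `u ≥ 1`, and `f u ≥ (1/8) * (u - 1)^2` for `0 < u ≤ 1`. -/
theorem js_generator_quadratic_bounds :
    (∀ u : ℝ, 1 ≤ u →
        u / 2 * Real.log u - (u + 1) / 2 * Real.log ((u + 1) / 2) ≤ 1/8 * (u - 1)^2) ∧
    (∀ u : ℝ, 0 < u → u ≤ 1 →
        1/8 * (u - 1)^2 ≤ u / 2 * Real.log u - (u + 1) / 2 * Real.log ((u + 1) / 2)) :=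
  ⟨fun _ hu => jsGenerator_le_sq_of_one_le hu, fun _ hu₀ hu₁ => sq_le_jsGenerator_of_le_one hu₀ hu₁⟩
end
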